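/- The horizontal projection is SO(3)-equivariant: for g ∈ SO(3), points x⁽¹⁾,…,x⁽ᴺ⁾ ∈ ℝ³ with K(x) invertible, and any v ∈ (ℝ³)ᴺ, one has P_{g·x}(g·v)⁽ⁿ⁾ = g · (P_x(v)⁽ⁿ⁾) for all n, where g·x := (g x⁽ⁿ⁾)ₙ, g·v := (g v⁽ⁿ⁾)ₙ, and P_x(v)⁽ⁿ⁾ := v⁽ⁿ⁾ − (K(x)⁻¹ Σₘ x⁽ᵐ⁾ × v⁽ᵐ⁾) × x⁽ⁿ⁾. -/
import Mathlib


open Matrix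

lemma cross_mulVec (A : Matrix (Fin 3) (Fin 3) ℝ) (a b : Fin 3 → ℝ) :
    crossProduct (A.mulVec a) (A.mulVec b) = (A.adjugate)ᵀ.mulVec (crossProduct a b) := by
  funext i
  fin_cases i <;>
    simp [crossProduct, mulVec, dotProduct, adjugate_fin_three, Fin.sum_univ_succ,
      transpose_apply] <;> ring

lemma vecMulVec_mulVec (g : Matrix (Fin 3) (Fin 3) ℝ) (a b : Fin 3 → ℝ) :
    vecMulVec (g.mulVec a) (g.mulVec b) = g * vecMulVec a b * gᵀ := by
  ext i j
  simp [vecMulVec_apply, mul_apply, mulVec, dotProduct, Finset.sum_mul, Finset.mul_sum,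
    transpose_apply]
  exact Finset.sum_congr rfl fun k _ => Finset.sum_congr rfl fun l _ => by ring

/-- The inertia-type matrix `K`. -/
def Kmat {N : ℕ} (x : Fin N → Fin 3 → ℝ) : Matrix (Fin 3) (Fin 3) ℝ :=
  (∑ n, x n ⬝ᵥ x n) • (1 : Matrix (Fin 3) (Fin 3) ℝ) - ∑ n, vecMulVec (x n) (x n)

/-- The horizontal projection at the configuration `x`. -/
noncomputable def Pproj {N : ℕ} (x v : Fin N → Fin 3 → ℝ) : Fin N → Fin 3 → ℝ :=
  fun n => v n
    - crossProduct ((Kmat x)⁻¹.mulVec (∑ m, crossProduct (x m) (v m))) (x n)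

theorem stmt12 (N : ℕ) (x : Fin N → Fin 3 → ℝ)
    (g : Matrix (Fin 3) (Fin 3) ℝ) (hg : g * gᵀ = 1) (hgdet : g.det = 1)
    (hKinv : IsUnit (Kmat x).det)
    (v : Fin N → Fin 3 → ℝ) (n : Fin N) :
    Pproj (fun m => g.mulVec (x m)) (fun m => g.mulVec (v m)) n
      = g.mulVec (Pproj x v n) := by
  have hg' : gᵀ * g = 1 := mul_eq_one_comm.mp hg
  have hginv : g⁻¹ = gᵀ := inv_eq_right_inv hg
  have hgTinv : gᵀ⁻¹ = g := inv_eq_right_inv hg'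
  have hadj : (g.adjugate)ᵀ = g := by
    have : g.adjugate = gᵀ := by
      calc g.adjugate = gᵀ * (g * g.adjugate) := by rw [← mul_assoc, hg', one_mul]
        _ = gᵀ := by rw [mul_adjugate, hgdet, one_smul, mul_one]
    rw [this, transpose_transpose]
  have hcross : ∀ a b : Fin 3 → ℝ,
      crossProduct (g.mulVec a) (g.mulVec b) = g.mulVec (crossProduct a b) := by
    intro a b; rw [cross_mulVec, hadj]
  -- dot product invariance
  have hdot : ∀ a : Fin 3 → ℝ, (g.mulVec a) ⬝ᵥ (g.mulVec a) = a ⬝ᵥ a := by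
    intro a
    rw [dotProduct_mulVec, ← mulVec_transpose, mulVec_mulVec, hg', one_mulVec]
  -- K equivariance
  have hK : Kmat (fun m => g.mulVec (x m)) = g * Kmat x * gᵀ := by
    unfold Kmat
    simp only [hdot, vecMulVec_mulVec]
    rw [Matrix.mul_sub, Matrix.sub_mul, ← Finset.sum_mul, ← Matrix.mul_sum]
    congr 1
    rw [Matrix.mul_smul, mul_one, Matrix.smul_mul, hg]
  have hKinvEq : (Kmat (fun m => g.mulVec (x m)))⁻¹ = g * (Kmat x)⁻¹ * gᵀ := by
    rw [hK, Matrix.mul_inv_rev, Matrix.mul_inv_rev, hgTinv, hginv, mul_assoc]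
  -- sum of crosses
  have hsum : (∑ m, crossProduct (g.mulVec (x m)) (g.mulVec (v m)))
      = g.mulVec (∑ m, crossProduct (x m) (v m)) := by
    simp only [hcross]
    exact (map_sum g.mulVecLin (fun m => crossProduct (x m) (v m)) Finset.univ).symm
  unfold Pproj
  rw [hKinvEq, hsum, Matrix.mulVec_sub, ← hcross]
  congr 2
  rw [← mulVec_mulVec, ← mulVec_mulVec, mulVec_mulVec _ gᵀ g, hg', one_mulVec]
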